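/- Let a be an even positive integer and b ∈ ℝ with a(a-1) ≥ 0 and a·b·(a+b-1) ≤ 0. Then the function η(v,m) = v^a m^b is convex on the domain {(v,m) : v ∈ ℝ, m > 0}, i.e., its Hessian matrix is positive semidefinite at every point of this domain. -/

import Mathlib

/-!
It suffices to show that `η` is convex along every line `t ↦ (v + t x, m + t y)` in the half-plane,
and there the second derivative is the Hessian form `(x, y) D²η (x, y)ᵀ`. Its diagonal entries are
nonnegative because `a` is even and `b ≤ 0`, and its determinant is
`v ^ (2a - 2) m ^ (2b - 2) (a(a-1)b(b-1) - (ab)²) = -v ^ (2a - 2) m ^ (2b - 2) ab(a+b-1) ≥ 0`.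
-/

open Real

lemma quadForm_nonneg_of_sq_le_mul {A B C : ℝ} (hA : 0 ≤ A) (hC : 0 ≤ C) (hB : B ^ 2 ≤ A * C)
    (x y : ℝ) : 0 ≤ A * x ^ 2 + 2 * B * (x * y) + C * y ^ 2 := by
  rcases hA.eq_or_lt with rfl | hA
  · have hB0 : B = 0 := by nlinarith
    subst hB0
    nlinarith
  · nlinarith [sq_nonneg (A * x + B * y), mul_nonneg (sub_nonneg.2 hB) (sq_nonneg y)]

theorem convexOn_of_convexOn_line {E : Type*} [AddCommGroup E] [Module ℝ E] {s : Set E}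
    {f : E → ℝ} (hs : Convex ℝ s)
    (hf : ∀ x ∈ s, ∀ d : E, ConvexOn ℝ {t : ℝ | x + t • d ∈ s} (fun t => f (x + t • d))) :
    ConvexOn ℝ s f := by
  refine ⟨hs, fun x hx y hy α β hα hβ hαβ => ?_⟩
  have h0 : (0 : ℝ) ∈ {t : ℝ | x + t • (y - x) ∈ s} := by simpa using hx
  have h1 : (1 : ℝ) ∈ {t : ℝ | x + t • (y - x) ∈ s} := by simpa using hy
  have hline : x + β • (y - x) = α • x + β • y := by
    rw [eq_sub_of_add_eq hαβ]; module
  simpa [hline] using (hf x hx (y - x)).2 h0 h1 hα hβ hαβ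

/-- `(x, y) D²η(v, m) (x, y)ᵀ` for `η(v, m) = v ^ a * m ^ b`. For `a < 2` the truncated exponents
`a - 2` and `a - 1` only occur multiplied by `a * (a - 1) = 0` or `a = 0`. -/
noncomputable def powMulRpowHessianForm (a : ℕ) (b v m x y : ℝ) : ℝ :=
  a * (a - 1) * (v ^ (a - 2) * m ^ b) * x ^ 2 + 2 * (a * b * (v ^ (a - 1) * m ^ (b - 1))) * (x * y)
    + b * (b - 1) * (v ^ a * m ^ (b - 2)) * y ^ 2

theorem powMulRpowHessianForm_nonneg {a : ℕ} {b : ℝ} (ha : Even a) (hb : 0 ≤ b * (b - 1))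
    (hab : a * b * (a + b - 1) ≤ 0) {m : ℝ} (hm : 0 < m) (v x y : ℝ) :
    0 ≤ powMulRpowHessianForm a b v m x y := by
  have hA : (0 : ℝ) ≤ a * (a - 1) := by
    rcases Nat.eq_zero_or_pos a with rfl | ha1
    · simp
    · have : (1 : ℝ) ≤ a := by exact_mod_cast ha1
      positivity
  have hv : v ^ (a - 2) * v ^ a = (v ^ (a - 1)) ^ 2 := by
    obtain ⟨k, rfl⟩ := ha
    rw [← pow_add, ← pow_mul, show k + k - 2 + (k + k) = (k + k - 1) * 2 by omega]
  have hm' : m ^ b * m ^ (b - 2) = (m ^ (b - 1)) ^ 2 := by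
    rw [sq, ← rpow_add hm, ← rpow_add hm]; ring_nf
  refine quadForm_nonneg_of_sq_le_mul ?_ ?_ ?_ x y
  · exact mul_nonneg hA (mul_nonneg ((ha.tsub even_two).pow_nonneg v) (rpow_pos_of_pos hm b).le)
  · exact mul_nonneg hb (mul_nonneg (ha.pow_nonneg v) (rpow_pos_of_pos hm _).le)
  · calc (a * b * (v ^ (a - 1) * m ^ (b - 1))) ^ 2
        = (a * b) ^ 2 * ((v ^ (a - 1)) ^ 2 * (m ^ (b - 1)) ^ 2) := by ring
      _ ≤ (a * (a - 1) * (b * (b - 1))) * ((v ^ (a - 1)) ^ 2 * (m ^ (b - 1)) ^ 2) := by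
          gcongr; nlinarith
      _ = a * (a - 1) * (v ^ (a - 2) * m ^ b) * (b * (b - 1) * (v ^ a * m ^ (b - 2))) := by
          rw [← hv, ← hm']; ring

theorem HasDerivAt.pow_mul_rpow {u w : ℝ → ℝ} {u' w' t : ℝ} (hu : HasDerivAt u u' t)
    (hw : HasDerivAt w w' t) (hwt : 0 < w t) (k : ℕ) (e : ℝ) :
    HasDerivAt (fun s => u s ^ k * w s ^ e)
      (k * u' * (u t ^ (k - 1) * w t ^ e) + e * w' * (u t ^ k * w t ^ (e - 1))) t :=
  ((hu.pow k).mul (hw.rpow_const (Or.inl hwt.ne'))).congr_deriv (by simp only [Pi.pow_apply]; ring)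

section Line

variable (v m x y : ℝ)

theorem hasDerivAt_firstDeriv_pow_mul_rpow_line (a : ℕ) (b : ℝ) {t : ℝ} (ht : 0 < m + t * y) :
    HasDerivAt (fun s => a * x * ((v + s * x) ^ (a - 1) * (m + s * y) ^ b)
        + b * y * ((v + s * x) ^ a * (m + s * y) ^ (b - 1)))
      (powMulRpowHessianForm a b (v + t * x) (m + t * y) x y) t := by
  have hu := (hasDerivAt_mul_const (x := t) x).const_add v
  have hw := (hasDerivAt_mul_const (x := t) y).const_add m
  refine (((hu.pow_mul_rpow hw ht (a - 1) b).const_mul (a * x)).add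
    ((hu.pow_mul_rpow hw ht a (b - 1)).const_mul (b * y))).congr_deriv ?_
  have hcast : (a : ℝ) * ((a - 1 : ℕ) : ℝ) = a * (a - 1) := by
    rcases Nat.eq_zero_or_pos a with rfl | ha
    · simp
    · rw [Nat.cast_sub ha, Nat.cast_one]
  rw [powMulRpowHessianForm, show a - 1 - 1 = a - 2 by omega, show b - 1 - 1 = b - 2 by ring]
  linear_combination x ^ 2 * ((v + t * x) ^ (a - 2) * (m + t * y) ^ b) * hcast

theorem convexOn_pow_mul_rpow_line {a : ℕ} {b : ℝ} (ha : Even a) (hb : 0 ≤ b * (b - 1))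
    (hab : a * b * (a + b - 1) ≤ 0) :
    ConvexOn ℝ {t : ℝ | 0 < m + t * y} (fun t => (v + t * x) ^ a * (m + t * y) ^ b) := by
  set D := {t : ℝ | 0 < m + t * y}
  have hDconv : Convex ℝ D := fun t₁ h₁ t₂ h₂ α β hα hβ hαβ => by
    have hcomb : m + (α * t₁ + β * t₂) * y = α * (m + t₁ * y) + β * (m + t₂ * y) := by
      linear_combination (-m) * hαβ
    simpa [D, hcomb] using convex_Ioi (0 : ℝ) h₁ h₂ hα hβ hαβ
  have hg : ∀ t ∈ D, HasDerivAt (fun t => (v + t * x) ^ a * (m + t * y) ^ b)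
      (a * x * ((v + t * x) ^ (a - 1) * (m + t * y) ^ b)
        + b * y * ((v + t * x) ^ a * (m + t * y) ^ (b - 1))) t := fun t ht =>
    (((hasDerivAt_mul_const x).const_add v).pow_mul_rpow ((hasDerivAt_mul_const y).const_add m)
      ht a b).congr_deriv (by ring)
  exact convexOn_of_hasDerivWithinAt2_nonneg hDconv
    (fun t ht => (hg t ht).continuousAt.continuousWithinAt)
    (fun t ht => (hg t (interior_subset ht)).hasDerivWithinAt)
    (fun t ht => (hasDerivAt_firstDeriv_pow_mul_rpow_line v m x y a b
      (interior_subset ht : t ∈ D)).hasDerivWithinAt)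
    (fun t ht => powMulRpowHessianForm_nonneg ha hb hab (interior_subset ht : t ∈ D) _ _ _)

end Line

theorem power_entropy_convex (a : ℕ) (b : ℝ) (ha : Even a) (hapos : 0 < a)
    (h2 : (a : ℝ) * b * ((a : ℝ) + b - 1) ≤ 0) :
    ConvexOn ℝ {p : ℝ × ℝ | 0 < p.2} (fun p : ℝ × ℝ => p.1 ^ a * p.2 ^ b) := by
  have hb : 0 ≤ b * (b - 1) := by
    have haR : (1 : ℝ) ≤ a := by exact_mod_cast hapos
    have hb0 : b ≤ 0 := by
      by_contra! hb
      have : 0 < (a : ℝ) * b * (a + b - 1) := mul_pos (by positivity) (by linarith)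
      linarith
    nlinarith
  refine convexOn_of_convexOn_line (convex_halfSpace_gt ⟨fun _ _ => rfl, fun _ _ => rfl⟩ 0)
    fun p _ d => ?_
  simpa using convexOn_pow_mul_rpow_line p.1 p.2 d.1 d.2 ha hb h2
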